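/- arXiv:2508.11799 — 2 statements merged into one kernel-verified Lean document; each statement's English description precedes it below -/
import Mathlib

section
/- Let Uᵢ = {Γᵢ z : zᵀSᵢz ≤ τᵢ} and Uⱼ = {Γⱼ z : zᵀSⱼz ≤ τⱼ} be ellipsoidal sets (Sᵢ, Sⱼ positive definite, τᵢ, τⱼ ≥ 0), and let Aᵢ ∈ ℝ^{p×nᵢ}, Aⱼ ∈ ℝ^{p×nⱼ} with rows a_m^{(i)}, a_m^{(j)}. Define μᵢ, μⱼ ∈ ℝ^p by (μᵢ)_m = √τᵢ‖Sᵢ^{-1/2}Γᵢᵀ a_m^{(i)}‖₂ and (μⱼ)_m = √τⱼ‖Sⱼ^{-1/2}Γⱼᵀ a_m^{(j)}‖₂. Then sup over ζᵢ ∈ Uᵢ, ζⱼ ∈ Uⱼ of ‖Aᵢζᵢ − Aⱼζⱼ‖₂ is at most ‖μᵢ + μⱼ‖₂. -/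
/-!
Each coordinate of `Aᵢζᵢ` is a linear functional `⟨Γᵢᵀ aₘ, z⟩` of the ellipsoid parameter, and
Cauchy–Schwarz in the inner product `⟨x, y⟩_S = xᵀ S y` bounds it on `zᵀ S z ≤ τ` by
`√τ ‖Γᵢᵀ aₘ‖_{S⁻¹} = (μᵢ)ₘ`. The triangle inequality then bounds the `m`-th coordinate of
`Aᵢζᵢ − Aⱼζⱼ` by `(μᵢ)ₘ + (μⱼ)ₘ`, and these bounds combine in the Euclidean norm.
-/

open Matrix

theorem Matrix.PosSemidef.dotProduct_mulVec_sq_le {n : Type*} [Fintype n]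
    {S : Matrix n n ℝ} (hS : S.PosSemidef) (x y : n → ℝ) :
    (x ⬝ᵥ (S *ᵥ y)) ^ 2 ≤ (x ⬝ᵥ (S *ᵥ x)) * (y ⬝ᵥ (S *ᵥ y)) := by
  let := S.toSeminormedAddCommGroup hS
  let := S.toInnerProductSpace hS
  have inner_eq : ∀ u v : n → ℝ, inner ℝ u v = u ⬝ᵥ (S *ᵥ v) := fun u v => by
    change (S *ᵥ v) ⬝ᵥ star u = _
    rw [star_trivial, dotProduct_comm]
  simpa only [inner_eq, sq] using real_inner_mul_inner_self_le x y

theorem Matrix.PosDef.abs_dotProduct_le_of_dotProduct_mulVec_le {n : Type*} [Fintype n]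
    [DecidableEq n] {S : Matrix n n ℝ} (hS : S.PosDef) {τ : ℝ} (b : n → ℝ) {z : n → ℝ}
    (hz : z ⬝ᵥ (S *ᵥ z) ≤ τ) :
    |b ⬝ᵥ z| ≤ Real.sqrt τ * Real.sqrt (b ⬝ᵥ (S⁻¹ *ᵥ b)) := by
  set x := S⁻¹ *ᵥ b
  have hSx : S *ᵥ x = b := by
    rw [mulVec_mulVec, mul_nonsing_inv _ hS.det_pos.ne'.isUnit, one_mulVec]
  have hxS : x ᵥ* S = b := by
    rw [← mulVec_transpose, ← conjTranspose_eq_transpose_of_trivial, hS.isHermitian.eq, hSx]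
  have hbx : 0 ≤ b ⬝ᵥ x := by
    simpa only [hSx, star_trivial, dotProduct_comm x] using hS.posSemidef.dotProduct_mulVec_nonneg x
  have cauchy_schwarz : (b ⬝ᵥ z) ^ 2 ≤ (b ⬝ᵥ x) * τ := by
    calc (b ⬝ᵥ z) ^ 2 = (x ⬝ᵥ (S *ᵥ z)) ^ 2 := by rw [dotProduct_mulVec, hxS]
      _ ≤ (x ⬝ᵥ (S *ᵥ x)) * (z ⬝ᵥ (S *ᵥ z)) := hS.posSemidef.dotProduct_mulVec_sq_le x z
      _ ≤ (b ⬝ᵥ x) * τ := by rw [hSx, dotProduct_comm x]; gcongr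
  calc |b ⬝ᵥ z| ≤ Real.sqrt ((b ⬝ᵥ x) * τ) := Real.abs_le_sqrt cauchy_schwarz
    _ = Real.sqrt τ * Real.sqrt (b ⬝ᵥ x) := by rw [Real.sqrt_mul hbx, mul_comm]

theorem Matrix.mulVec_mulVec_apply_eq_dotProduct {l m n : Type*} [Fintype m] [Fintype n]
    (A : Matrix l m ℝ) (Γ : Matrix m n ℝ) (z : n → ℝ) (i : l) :
    (A *ᵥ (Γ *ᵥ z)) i = (Γᵀ *ᵥ A i) ⬝ᵥ z := by
  rw [mulVec_transpose, ← dotProduct_mulVec]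
  rfl

theorem Matrix.PosDef.abs_mulVec_mulVec_apply_le {l m n : Type*} [Fintype m] [Fintype n]
    [DecidableEq n] {S : Matrix n n ℝ} (hS : S.PosDef) {τ : ℝ} (A : Matrix l m ℝ)
    (Γ : Matrix m n ℝ) {z : n → ℝ} (hz : z ⬝ᵥ (S *ᵥ z) ≤ τ) (i : l) :
    |(A *ᵥ (Γ *ᵥ z)) i| ≤
      Real.sqrt τ * Real.sqrt ((Γᵀ *ᵥ A i) ⬝ᵥ (S⁻¹ *ᵥ (Γᵀ *ᵥ A i))) := by
  rw [mulVec_mulVec_apply_eq_dotProduct]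
  exact hS.abs_dotProduct_le_of_dotProduct_mulVec_le _ hz

theorem stmt6_general {p ni nj ki kj : ℕ}
    (Si : Matrix (Fin ki) (Fin ki) ℝ) (hSi : Si.PosDef)
    (Sj : Matrix (Fin kj) (Fin kj) ℝ) (hSj : Sj.PosDef)
    (τi τj : ℝ)
    (Γi : Matrix (Fin ni) (Fin ki) ℝ) (Γj : Matrix (Fin nj) (Fin kj) ℝ)
    (Ai : Matrix (Fin p) (Fin ni) ℝ) (Aj : Matrix (Fin p) (Fin nj) ℝ)
    (μi μj : Fin p → ℝ)
    (hμi : ∀ m, μi m = Real.sqrt τi *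
      Real.sqrt ((Γiᵀ *ᵥ Ai m) ⬝ᵥ (Si⁻¹ *ᵥ (Γiᵀ *ᵥ Ai m))))
    (hμj : ∀ m, μj m = Real.sqrt τj *
      Real.sqrt ((Γjᵀ *ᵥ Aj m) ⬝ᵥ (Sj⁻¹ *ᵥ (Γjᵀ *ᵥ Aj m)))) :
    sSup {y : ℝ | ∃ zi : Fin ki → ℝ, ∃ zj : Fin kj → ℝ,
        zi ⬝ᵥ (Si *ᵥ zi) ≤ τi ∧ zj ⬝ᵥ (Sj *ᵥ zj) ≤ τj ∧
        y = Real.sqrt (∑ i, ((Ai *ᵥ (Γi *ᵥ zi)) i - (Aj *ᵥ (Γj *ᵥ zj)) i) ^ 2)} ≤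
      Real.sqrt (∑ m, (μi m + μj m) ^ 2) := by
  refine Real.sSup_le ?_ (Real.sqrt_nonneg _)
  rintro _ ⟨zi, zj, hzi, hzj, rfl⟩
  refine Real.sqrt_le_sqrt (Finset.sum_le_sum fun m _ => ?_)
  have coord_le : |(Ai *ᵥ (Γi *ᵥ zi)) m - (Aj *ᵥ (Γj *ᵥ zj)) m| ≤ μi m + μj m := by
    rw [hμi, hμj]
    exact (abs_sub _ _).trans (add_le_add (hSi.abs_mulVec_mulVec_apply_le Ai Γi hzi m)
      (hSj.abs_mulVec_mulVec_apply_le Aj Γj hzj m))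
  rw [← sq_abs]
  exact pow_le_pow_left₀ (abs_nonneg _) coord_le 2

/-- Two-ellipsoid deviation bound (Proposition 3): with `Uᵢ = {Γᵢ z : zᵀ Sᵢ z ≤ τᵢ}`,
`Uⱼ = {Γⱼ z : zᵀ Sⱼ z ≤ τⱼ}` and `(μᵢ)ₘ = √τᵢ √(aₘ⁽ⁱ⁾ᵀ Γᵢ Sᵢ⁻¹ Γᵢᵀ aₘ⁽ⁱ⁾)` (similarly μⱼ),
`sup_{ζᵢ∈Uᵢ, ζⱼ∈Uⱼ} ‖Aᵢζᵢ − Aⱼζⱼ‖₂ ≤ ‖μᵢ + μⱼ‖₂`. -/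
theorem stmt6 {p ni nj ki kj : ℕ}
    (Si : Matrix (Fin ki) (Fin ki) ℝ) (hSi : Si.PosDef)
    (Sj : Matrix (Fin kj) (Fin kj) ℝ) (hSj : Sj.PosDef)
    (τi τj : ℝ) (hτi : 0 ≤ τi) (hτj : 0 ≤ τj)
    (Γi : Matrix (Fin ni) (Fin ki) ℝ) (Γj : Matrix (Fin nj) (Fin kj) ℝ)
    (Ai : Matrix (Fin p) (Fin ni) ℝ) (Aj : Matrix (Fin p) (Fin nj) ℝ)
    (μi μj : Fin p → ℝ)
    (hμi : ∀ m, μi m = Real.sqrt τi *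
      Real.sqrt ((Γiᵀ *ᵥ Ai m) ⬝ᵥ (Si⁻¹ *ᵥ (Γiᵀ *ᵥ Ai m))))
    (hμj : ∀ m, μj m = Real.sqrt τj *
      Real.sqrt ((Γjᵀ *ᵥ Aj m) ⬝ᵥ (Sj⁻¹ *ᵥ (Γjᵀ *ᵥ Aj m)))) :
    sSup {y : ℝ | ∃ zi : Fin ki → ℝ, ∃ zj : Fin kj → ℝ,
        zi ⬝ᵥ (Si *ᵥ zi) ≤ τi ∧ zj ⬝ᵥ (Sj *ᵥ zj) ≤ τj ∧
        y = Real.sqrt (∑ i, ((Ai *ᵥ (Γi *ᵥ zi)) i - (Aj *ᵥ (Γj *ᵥ zj)) i) ^ 2)} ≤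
      Real.sqrt (∑ m, (μi m + μj m) ^ 2) :=
  stmt6_general Si hSi Sj hSj τi τj Γi Γj Ai Aj μi μj hμi hμj
end

section
/- (S-lemma direction used for robust convex norm constraints) Let S be symmetric positive definite on ℝⁿ, τ > 0, M ∈ ℝ^{d×n}, b ∈ ℝ^d, c > 0. If there exists α ≥ 0 such that the block matrix [[αS, 0, Mᵀ],[0, c² − ατ, bᵀ],[M, b, I_d]] is positive semidefinite, then ‖Mz + b‖₂ ≤ c for all z with zᵀSz ≤ τ. -/
/-!
Taking the Schur complement of the identity block, the block matrix is positive semidefinite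
exactly when `[[αS, 0], [0, c² − ατ]] − [M | b]ᵀ[M | b]` is. Evaluating this quadratic form at
`(z, 1)` gives `‖Mz + b‖² ≤ α zᵀSz + c² − ατ`, and the right-hand side is at most `c²` as soon
as `zᵀSz ≤ τ`, since `α ≥ 0`.
-/

open Matrix

namespace Matrix

variable {m n R : Type*} [Fintype m] [Fintype n] [DecidableEq n]
  [CommRing R] [PartialOrder R] [StarRing R] [StarOrderedRing R] [NoZeroDivisors R]

theorem PosSemidef.star_mulVec_dotProduct_mulVec_le_of_fromBlocks_one
    {A : Matrix m m R} {B : Matrix n m R} (h : (fromBlocks A Bᴴ B 1).PosSemidef) (x : m → R) :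
    star (B *ᵥ x) ⬝ᵥ (B *ᵥ x) ≤ star x ⬝ᵥ (A *ᵥ x) := by
  let _ : Invertible (1 : Matrix n n R) := invertibleOne
  have hschur := ((PosDef.fromBlocks₂₂ A Bᴴ PosDef.one).mp
    (by rwa [conjTranspose_conjTranspose])).dotProduct_mulVec_nonneg x
  rw [inv_one, Matrix.mul_one, sub_mulVec, dotProduct_sub, sub_nonneg,
    conjTranspose_conjTranspose] at hschur
  rwa [star_mulVec, ← dotProduct_mulVec, mulVec_mulVec]

end Matrix

theorem stmt8_general {n d : ℕ} (S : Matrix (Fin n) (Fin n) ℝ)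
    (τ : ℝ) (M : Matrix (Fin d) (Fin n) ℝ) (b : Fin d → ℝ)
    (c : ℝ) (hc : 0 < c)
    (h : ∃ α : ℝ, 0 ≤ α ∧
      (Matrix.fromBlocks
        (Matrix.fromBlocks (α • S) 0 0 (Matrix.of fun (_ : Fin 1) (_ : Fin 1) => c ^ 2 - α * τ))
        (Matrix.of fun (x : Fin n ⊕ Fin 1) (j : Fin d) =>
          Sum.elim (fun i => M j i) (fun _ => b j) x)
        (Matrix.of fun (j : Fin d) (x : Fin n ⊕ Fin 1) =>
          Sum.elim (fun i => M j i) (fun _ => b j) x)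
        (1 : Matrix (Fin d) (Fin d) ℝ)).PosSemidef) :
    ∀ z : Fin n → ℝ, z ⬝ᵥ (S *ᵥ z) ≤ τ →
      Real.sqrt (∑ i, ((M *ᵥ z) i + b i) ^ 2) ≤ c := by
  obtain ⟨α, hα, hpsd⟩ := h
  intro z hz
  have hblock : (fromBlocks (fromBlocks (α • S) 0 0 (of fun _ _ => c ^ 2 - α * τ))
      (fromCols M (replicateCol (Fin 1) b))ᴴ (fromCols M (replicateCol (Fin 1) b)) 1).PosSemidef :=
    hpsd
  have hB : fromCols M (replicateCol (Fin 1) b) *ᵥ Sum.elim z (1 : Fin 1 → ℝ) = M *ᵥ z + b := by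
    rw [fromCols_mulVec_sumElim]
    congr 1
    ext j
    simp [mulVec, dotProduct]
  have hA : Sum.elim z (1 : Fin 1 → ℝ) ⬝ᵥ
      (fromBlocks (α • S) 0 0 (of fun _ _ => c ^ 2 - α * τ) *ᵥ Sum.elim z (1 : Fin 1 → ℝ)) =
      α * (z ⬝ᵥ S *ᵥ z) + (c ^ 2 - α * τ) := by
    simp only [fromBlocks_mulVec, zero_mulVec, add_zero, zero_add, sumElim_dotProduct_sumElim,
      smul_mulVec, dotProduct_smul, smul_eq_mul]
    simp [mulVec, dotProduct]
  have key := hblock.star_mulVec_dotProduct_mulVec_le_of_fromBlocks_one (Sum.elim z 1)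
  rw [star_trivial, star_trivial, hB, hA] at key
  have hsq : ∑ i, ((M *ᵥ z) i + b i) ^ 2 = (M *ᵥ z + b) ⬝ᵥ (M *ᵥ z + b) := by
    simp [dotProduct, sq]
  rw [Real.sqrt_le_iff, hsq]
  exact ⟨hc.le, by linarith [mul_le_mul_of_nonneg_left hz hα]⟩

/-- Sufficient S-lemma/Schur-complement direction: if for some `α ≥ 0` the block matrix
`[[αS, 0, Mᵀ], [0, c² − ατ, bᵀ], [M, b, I]]` is positive semidefinite, then
`‖Mz + b‖₂ ≤ c` for all `z` with `zᵀ S z ≤ τ`. -/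
theorem stmt8 {n d : ℕ} (S : Matrix (Fin n) (Fin n) ℝ) (hS : S.PosDef)
    (τ : ℝ) (hτ : 0 < τ) (M : Matrix (Fin d) (Fin n) ℝ) (b : Fin d → ℝ)
    (c : ℝ) (hc : 0 < c)
    (h : ∃ α : ℝ, 0 ≤ α ∧
      (Matrix.fromBlocks
        (Matrix.fromBlocks (α • S) 0 0 (Matrix.of fun (_ : Fin 1) (_ : Fin 1) => c ^ 2 - α * τ))
        (Matrix.of fun (x : Fin n ⊕ Fin 1) (j : Fin d) =>
          Sum.elim (fun i => M j i) (fun _ => b j) x)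
        (Matrix.of fun (j : Fin d) (x : Fin n ⊕ Fin 1) =>
          Sum.elim (fun i => M j i) (fun _ => b j) x)
        (1 : Matrix (Fin d) (Fin d) ℝ)).PosSemidef) :
    ∀ z : Fin n → ℝ, z ⬝ᵥ (S *ᵥ z) ≤ τ →
      Real.sqrt (∑ i, ((M *ᵥ z) i + b i) ^ 2) ≤ c :=
  stmt8_general S τ M b c hc h
end
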